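/- Let n ≥ 3, ζ = 2π/n, and for k ∈ {1, ..., n} define α_k = 4 cos ζ · sin²(kζ/2), γ_k = 2 sin(kζ) sin ζ, and δ_k = (α_k² - γ_k²)/(2α_k) when α_k ≠ 0. Then α_k² - γ_k² = 16 (sin²(kζ/2) - sin²ζ) sin²(kζ/2); consequently, for n ≥ 5 and 1 ≤ k ≤ n/2 one has δ₁ < 0, δ₂ = 0, and δ_k > 0 for 3 ≤ k ≤ n/2. -/
import Mathlib


/-- `α_k = 4 cos ζ sin²(kζ/2)` with `ζ = 2π/n`. -/
noncomputable def aCoef (n k : ℕ) : ℝ :=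
  4 * Real.cos (2 * Real.pi / n) * Real.sin (k * (2 * Real.pi / n) / 2) ^ 2

/-- `γ_k = 2 sin(kζ) sin ζ` with `ζ = 2π/n`. -/
noncomputable def gCoef (n k : ℕ) : ℝ :=
  2 * Real.sin (k * (2 * Real.pi / n)) * Real.sin (2 * Real.pi / n)

/-- `δ_k = (α_k² - γ_k²)/(2α_k)`. -/
noncomputable def dCoef (n k : ℕ) : ℝ := (aCoef n k ^ 2 - gCoef n k ^ 2) / (2 * aCoef n k)

theorem stmt16 (n : ℕ) (hn : 5 ≤ n) :
    -- the factorization of α_k² - γ_k²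
    (∀ k : ℕ, aCoef n k ^ 2 - gCoef n k ^ 2
      = 16 * (Real.sin (k * (2 * Real.pi / n) / 2) ^ 2 - Real.sin (2 * Real.pi / n) ^ 2) *
          Real.sin (k * (2 * Real.pi / n) / 2) ^ 2) ∧
    -- δ₁ < 0, δ₂ = 0, and δ_k > 0 for 3 ≤ k ≤ n/2
    dCoef n 1 < 0 ∧ dCoef n 2 = 0 ∧
    (∀ k : ℕ, 3 ≤ k → 2 * k ≤ n → 0 < dCoef n k) := by
  have hπ := Real.pi_pos
  have hn5 : (5:ℝ) ≤ (n:ℝ) := by exact_mod_cast hn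
  have hn0 : (0:ℝ) < (n:ℝ) := by linarith
  set t : ℝ := 2 * Real.pi / n with ht
  have htpos : 0 < t := by positivity
  have htle : t ≤ 2 * Real.pi / 5 :=
    div_le_div_of_nonneg_left (by positivity) (by norm_num) hn5
  have htlt : t < Real.pi / 2 := by
    have : 2 * Real.pi / 5 < Real.pi / 2 := by nlinarith
    linarith
  have hcos : 0 < Real.cos t := Real.cos_pos_of_mem_Ioo ⟨by linarith, htlt⟩
  have key : ∀ k : ℕ, aCoef n k ^ 2 - gCoef n k ^ 2
      = 16 * (Real.sin ((k:ℝ) * t / 2) ^ 2 - Real.sin t ^ 2) *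
          Real.sin ((k:ℝ) * t / 2) ^ 2 := by
    intro k
    have hsin : Real.sin ((k:ℝ) * t) =
        2 * Real.sin ((k:ℝ) * t / 2) * Real.cos ((k:ℝ) * t / 2) := by
      rw [← Real.sin_two_mul]; congr 1; ring
    unfold aCoef gCoef
    rw [← ht, hsin]
    linear_combination (16 * Real.sin ((k:ℝ) * t / 2) ^ 4) * Real.sin_sq_add_cos_sq t
      - (16 * Real.sin t ^ 2 * Real.sin ((k:ℝ) * t / 2) ^ 2) *
        Real.sin_sq_add_cos_sq ((k:ℝ) * t / 2)
  have hx : ∀ k : ℕ, 1 ≤ k → 2 * k ≤ n →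
      0 < (k:ℝ) * t / 2 ∧ (k:ℝ) * t / 2 ≤ Real.pi / 2 := by
    intro k hk1 hk2
    have hk1' : (1:ℝ) ≤ (k:ℝ) := by exact_mod_cast hk1
    have hk2' : 2 * (k:ℝ) ≤ (n:ℝ) := by exact_mod_cast hk2
    constructor
    · nlinarith
    · rw [ht]
      rw [div_le_div_iff₀ (by norm_num) (by norm_num : (0:ℝ) < 2)]
      have : (k:ℝ) * (2 * Real.pi / n) = 2 * (k:ℝ) * Real.pi / n := by ring
      rw [this, div_mul_eq_mul_div, div_le_iff₀ hn0]
      nlinarith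
  have hsinpos : ∀ k : ℕ, 1 ≤ k → 2 * k ≤ n → 0 < Real.sin ((k:ℝ) * t / 2) := by
    intro k hk1 hk2
    obtain ⟨h1, h2⟩ := hx k hk1 hk2
    exact Real.sin_pos_of_pos_of_lt_pi h1 (by linarith)
  have hapos : ∀ k : ℕ, 1 ≤ k → 2 * k ≤ n → 0 < aCoef n k := by
    intro k hk1 hk2
    have := hsinpos k hk1 hk2
    unfold aCoef
    rw [← ht]
    positivity
  refine ⟨fun k => key k, ?_, ?_, ?_⟩
  · -- δ₁ < 0
    have h1n : 2 * 1 ≤ n := by omega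
    have ha := hapos 1 le_rfl h1n
    have hs := hsinpos 1 le_rfl h1n
    have hlt : Real.sin ((1:ℕ) * t / 2) < Real.sin t := by
      apply Real.strictMonoOn_sin ⟨by push_cast; linarith, by push_cast; linarith⟩
        ⟨by linarith, le_of_lt htlt⟩
      push_cast; linarith
    have hst : 0 < Real.sin t := Real.sin_pos_of_pos_of_lt_pi htpos (by linarith)
    have hnum : aCoef n 1 ^ 2 - gCoef n 1 ^ 2 < 0 := by
      rw [key 1]
      have h := mul_pos (show (0:ℝ) < Real.sin t ^ 2 - Real.sin ((1:ℕ) * t / 2) ^ 2 by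
        nlinarith) (pow_pos hs 2)
      nlinarith
    unfold dCoef
    exact div_neg_of_neg_of_pos hnum (by linarith)
  · -- δ₂ = 0
    unfold dCoef
    rw [key 2]
    have h2 : ((2:ℕ):ℝ) * t / 2 = t := by push_cast; ring
    rw [h2]
    simp
  · -- δ_k > 0 for 3 ≤ k ≤ n/2
    intro k hk3 hkn
    have hk1 : 1 ≤ k := by omega
    have ha := hapos k hk1 hkn
    have hs := hsinpos k hk1 hkn
    obtain ⟨h1, h2⟩ := hx k hk1 hkn
    have hst : 0 < Real.sin t := Real.sin_pos_of_pos_of_lt_pi htpos (by linarith)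
    have hk3' : (3:ℝ) ≤ (k:ℝ) := by exact_mod_cast hk3
    have hlt : Real.sin t < Real.sin ((k:ℝ) * t / 2) := by
      apply Real.strictMonoOn_sin ⟨by linarith, le_of_lt htlt⟩ ⟨by linarith, h2⟩
      nlinarith
    have hnum : 0 < aCoef n k ^ 2 - gCoef n k ^ 2 := by
      rw [key k]
      have h := mul_pos (show (0:ℝ) < Real.sin ((k:ℝ) * t / 2) ^ 2 - Real.sin t ^ 2 by
        nlinarith) (pow_pos hs 2)
      nlinarith
    unfold dCoef
    exact div_pos hnum (by linarith)
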